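/- arXiv:1902.02452 — 4 statements merged into one kernel-verified Lean document; each statement's English description precedes it below -/
import Mathlib

section
/- SURE is unbiased for the MSE in one dimension: for y = x + n with n ~ N(0, σ²) and h: ℝ → ℝ differentiable with bounded derivative, E[(x - h(y))²] = E[(y - h(y))² - σ² + 2σ²·h'(y)]. -/
open MeasureTheory ProbabilityTheory
open scoped NNReal

/-! Write `y = x + n` and `f n = n / 2 + x - h (x + n)`, so that pointwise
`(x - h y)² = (y - h y)² - 2 n f(n)`. Stein's lemma `E[n f(n)] = σ² E[f'(n)]`, which is integration
by parts against the Gaussian density (whose derivative is `-n / σ²` times itself), turns the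
correction term into `2σ² f'(n) = σ² - 2σ² h'(y)`. -/

theorem LipschitzWith.comp_memLp_of_isFiniteMeasure {α E F : Type*} [MeasurableSpace α]
    {μ : Measure α} [IsFiniteMeasure μ] [NormedAddCommGroup E] [NormedAddCommGroup F]
    {K : ℝ≥0} {g : E → F} {f : α → E} {p : ENNReal} (hg : LipschitzWith K g)
    (hf : MemLp f p μ) : MemLp (g ∘ f) p μ := by
  have h0 : MemLp ((fun e => g e - g 0) ∘ f) p μ :=
    (hg.sub (LipschitzWith.const (g 0))).comp_memLp (sub_self _) hf
  convert h0.add (memLp_const (g 0)) using 1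
  ext; simp

theorem lipschitzWith_of_abs_deriv_le {g : ℝ → ℝ} {C : ℝ} (hg : Differentiable ℝ g)
    (hC : ∀ t, |deriv g t| ≤ C) : LipschitzWith C.toNNReal g :=
  lipschitzWith_of_nnnorm_deriv_le hg fun t => by
    rw [← NNReal.coe_le_coe, coe_nnnorm, Real.norm_eq_abs]
    exact (hC t).trans (Real.le_coe_toNNReal C)

namespace ProbabilityTheory

theorem hasDerivAt_gaussianPDFReal (m : ℝ) (v : ℝ≥0) (t : ℝ) :
    HasDerivAt (gaussianPDFReal m v) (-((t - m) / v) * gaussianPDFReal m v t) t := by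
  have hexp : HasDerivAt (fun s => Real.exp (-(s - m) ^ 2 / (2 * v)))
      (Real.exp (-(t - m) ^ 2 / (2 * v)) * (-(2 * (t - m)) / (2 * v))) t := by
    refine HasDerivAt.exp ?_
    simpa using (((hasDerivAt_id t).sub_const m).pow 2).neg.div_const (2 * (v : ℝ))
  rw [gaussianPDFReal_def]
  refine (hexp.const_mul (Real.sqrt (2 * Real.pi * v))⁻¹).congr_deriv ?_
  beta_reduce
  ring

variable {m : ℝ} {v : ℝ≥0}

theorem integrable_gaussianReal_iff (hv : v ≠ 0) {f : ℝ → ℝ} :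
    Integrable f (gaussianReal m v) ↔ Integrable (fun t => gaussianPDFReal m v t * f t) := by
  rw [gaussianReal_of_var_ne_zero _ hv, integrable_withDensity_iff_integrable_smul'
    (measurable_gaussianPDF m v) (ae_of_all _ fun _ => gaussianPDF_lt_top)]
  simp only [toReal_gaussianPDF, smul_eq_mul]

theorem integral_sub_mul_eq_mul_integral_deriv {g : ℝ → ℝ} {K : ℝ≥0}
    (hg : Differentiable ℝ g) (hgK : LipschitzWith K g) :
    ∫ t, (t - m) * g t ∂gaussianReal m v = v * ∫ t, deriv g t ∂gaussianReal m v := by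
  rcases eq_or_ne v 0 with rfl | hv
  · simp [gaussianReal_zero_var]
  have hid : MemLp (fun t => t - m) 2 (gaussianReal m v) :=
    (memLp_id_gaussianReal 2).sub (memLp_const m)
  have hg2 : MemLp g 2 (gaussianReal m v) :=
    hgK.comp_memLp_of_isFiniteMeasure (memLp_id_gaussianReal 2)
  have h_mul : Integrable (fun t => (t - m) * g t) (gaussianReal m v) := hid.integrable_mul hg2
  have h_deriv : Integrable (deriv g) (gaussianReal m v) :=
    .of_bound (measurable_deriv g).aestronglyMeasurable K
      (ae_of_all _ fun _ => norm_deriv_le_of_lipschitz hgK)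
  have h_g : Integrable g (gaussianReal m v) := hg2.integrable one_le_two
  rw [integrable_gaussianReal_iff hv] at h_mul h_deriv h_g
  have ibp := integral_mul_deriv_eq_deriv_mul_of_integrable (u := g) (v := gaussianPDFReal m v)
    (fun t _ => (hg t).hasDerivAt) (fun t _ => hasDerivAt_gaussianPDFReal m v t)
    ((h_mul.const_mul (-(v : ℝ)⁻¹)).congr (ae_of_all _ fun t => by simp only [Pi.mul_apply]; ring))
    (h_deriv.congr (ae_of_all _ fun t => by simp only [Pi.mul_apply]; ring))
    (h_g.congr (ae_of_all _ fun t => by simp only [Pi.mul_apply]; ring))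
  rw [integral_gaussianReal_eq_integral_smul hv, integral_gaussianReal_eq_integral_smul hv]
  simp only [smul_eq_mul]
  have : ∫ t, g t * (-((t - m) / v) * gaussianPDFReal m v t)
      = -(v : ℝ)⁻¹ * ∫ t, gaussianPDFReal m v t * ((t - m) * g t) := by
    rw [← integral_const_mul]
    congr 1 with t
    ring
  rw [this, neg_mul, neg_inj, inv_mul_eq_iff_eq_mul₀ (NNReal.coe_ne_zero.mpr hv)] at ibp
  simp only [ibp, mul_comm (deriv g _)]

end ProbabilityTheory

theorem sure_unbiased_one_dim_general (x : ℝ) (σ : ℝ≥0)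
    (h : ℝ → ℝ) (hdiff : Differentiable ℝ h)
    (C : ℝ) (hC : ∀ t : ℝ, |deriv h t| ≤ C) :
    ∫ n, (x - h (x + n)) ^ 2 ∂(gaussianReal 0 (σ ^ 2))
      = ∫ n, ((x + n - h (x + n)) ^ 2 - (σ : ℝ) ^ 2
          + 2 * (σ : ℝ) ^ 2 * deriv h (x + n)) ∂(gaussianReal 0 (σ ^ 2)) := by
  set γ := gaussianReal 0 (σ ^ 2)
  set f : ℝ → ℝ := fun n => n / 2 + x - h (x + n)
  have hf' (n : ℝ) : HasDerivAt f (1 / 2 - deriv h (x + n)) n :=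
    (((hasDerivAt_id n).div_const 2).add_const x).sub
      ((hdiff (x + n)).hasDerivAt.comp_const_add x n)
  have hf_lip : LipschitzWith (1 / 2 + C).toNNReal f :=
    lipschitzWith_of_abs_deriv_le (fun n => (hf' n).differentiableAt) fun n => by
      have := abs_le.mp (hC (x + n))
      rw [(hf' n).deriv, abs_le]
      constructor <;> linarith
  have h_id : MemLp id 2 γ := memLp_id_gaussianReal 2
  have h_res : MemLp (fun n => x + n - h (x + n)) 2 γ :=
    (LipschitzWith.id.sub (lipschitzWith_of_abs_deriv_le hdiff hC)).comp_memLp_of_isFiniteMeasure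
      ((memLp_const x).add h_id)
  have h_mul : Integrable (fun n => n * f n) γ :=
    h_id.integrable_mul (hf_lip.comp_memLp_of_isFiniteMeasure h_id)
  have h_deriv : Integrable (deriv f) γ :=
    .of_bound (measurable_deriv f).aestronglyMeasurable _
      (ae_of_all _ fun _ => norm_deriv_le_of_lipschitz hf_lip)
  have stein := integral_sub_mul_eq_mul_integral_deriv (m := 0) (v := σ ^ 2)
    (fun n => (hf' n).differentiableAt) hf_lip
  simp only [sub_zero, NNReal.coe_pow] at stein
  calc ∫ n, (x - h (x + n)) ^ 2 ∂γ
      = ∫ n, ((x + n - h (x + n)) ^ 2 - 2 * (n * f n)) ∂γ :=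
        integral_congr_ae (ae_of_all _ fun n => by simp only [f]; ring)
    _ = ∫ n, ((x + n - h (x + n)) ^ 2 - 2 * ((σ : ℝ) ^ 2 * deriv f n)) ∂γ := by
        rw [integral_sub h_res.integrable_sq (h_mul.const_mul 2),
          integral_sub h_res.integrable_sq ((h_deriv.const_mul _).const_mul 2),
          integral_const_mul, integral_const_mul, integral_const_mul, stein]
    _ = _ := integral_congr_ae (ae_of_all _ fun n => by simp only [(hf' n).deriv]; ring)

/-- SURE is an unbiased estimator of the MSE in one dimension: for `y = x + n` with
`n ~ N(0, σ²)` and `h : ℝ → ℝ` differentiable with bounded derivative,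
`E[(x - h(y))²] = E[(y - h(y))² - σ² + 2σ²·h'(y)]`. -/
theorem sure_unbiased_one_dim (x : ℝ) (σ : ℝ≥0) (hσ : 0 < σ)
    (h : ℝ → ℝ) (hdiff : Differentiable ℝ h)
    (C : ℝ) (hC : ∀ t : ℝ, |deriv h t| ≤ C) :
    ∫ n, (x - h (x + n)) ^ 2 ∂(gaussianReal 0 (σ ^ 2))
      = ∫ n, ((x + n - h (x + n)) ^ 2 - (σ : ℝ) ^ 2
          + 2 * (σ : ℝ) ^ 2 * deriv h (x + n)) ∂(gaussianReal 0 (σ ^ 2)) :=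
  sure_unbiased_one_dim_general x σ h hdiff C hC
end

section
/- The directional-difference Monte-Carlo approximation of the divergence converges: if h: ℝ^N → ℝ^N is continuously differentiable with bounded derivative and ñ ~ N(0, I) is independent of y, then lim_{ε→0} E_ñ[ ñᵀ (h(y + ε·ñ) - h(y)) / ε ] = ∑ᵢ ∂hᵢ(y)/∂yᵢ. -/
open MeasureTheory ProbabilityTheory Filter
open scoped NNReal Topology

/-!
Dominated convergence: since `h` is `C`-Lipschitz, the difference quotient
`ñᵀ (h (y + ε ñ) - h y) / ε` is bounded by `N C ‖ñ‖²`, which is integrable, and it tends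
pointwise to `ñᵀ Dh(y) ñ`. For a standard Gaussian vector `E[ñᵢ ñⱼ] = δᵢⱼ`, so the expectation
of the quadratic form `ñᵀ M ñ` is `tr M` (Hutchinson's trace identity), here with
`M = Dh(y)`.
-/

open Matrix

section DirectionalDifference

variable {ι : Type*} [Fintype ι]

lemma abs_dotProduct_le_card_mul_norm_mul_norm (x v : ι → ℝ) :
    |x ⬝ᵥ v| ≤ Fintype.card ι * (‖x‖ * ‖v‖) := by
  calc |x ⬝ᵥ v| ≤ ∑ i, |x i * v i| := Finset.abs_sum_le_sum_abs _ _
    _ ≤ ∑ _i : ι, ‖x‖ * ‖v‖ := Finset.sum_le_sum fun i _ => by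
        rw [abs_mul]
        exact mul_le_mul (norm_le_pi_norm x i) (norm_le_pi_norm v i) (abs_nonneg _) (norm_nonneg _)
    _ = Fintype.card ι * (‖x‖ * ‖v‖) := by simp

lemma abs_dotProduct_sub_div_le {h : (ι → ℝ) → ι → ℝ} {K : ℝ≥0} (hK : LipschitzWith K h)
    (y x : ι → ℝ) {ε : ℝ} (hε : ε ≠ 0) :
    |x ⬝ᵥ (h (y + ε • x) - h y) / ε| ≤ Fintype.card ι * K * ‖x‖ ^ 2 := by
  have hlip : ‖h (y + ε • x) - h y‖ ≤ K * (|ε| * ‖x‖) := by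
    simpa [norm_smul] using hK.norm_sub_le (y + ε • x) y
  rw [abs_div, div_le_iff₀ (abs_pos.2 hε)]
  calc |x ⬝ᵥ (h (y + ε • x) - h y)|
      ≤ Fintype.card ι * (‖x‖ * ‖h (y + ε • x) - h y‖) :=
        abs_dotProduct_le_card_mul_norm_mul_norm _ _
    _ ≤ Fintype.card ι * (‖x‖ * (K * (|ε| * ‖x‖))) := by gcongr
    _ = Fintype.card ι * K * ‖x‖ ^ 2 * |ε| := by ring

lemma tendsto_dotProduct_sub_div {h : (ι → ℝ) → ι → ℝ} {y : ι → ℝ}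
    (hy : DifferentiableAt ℝ h y) (x : ι → ℝ) :
    Tendsto (fun ε : ℝ => x ⬝ᵥ (h (y + ε • x) - h y) / ε) (𝓝[≠] 0)
      (𝓝 (x ⬝ᵥ fderiv ℝ h y x)) := by
  have hline : HasDerivAt (fun ε : ℝ => y + ε • x) x 0 := by
    simpa using ((hasDerivAt_id (0 : ℝ)).smul_const x).const_add y
  have hderiv : HasDerivAt (fun ε : ℝ => h (y + ε • x)) (fderiv ℝ h y x) 0 := by
    refine HasFDerivAt.comp_hasDerivAt (f := fun ε : ℝ => y + ε • x) 0 ?_ hline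
    simpa using hy.hasFDerivAt
  refine ((continuous_const.dotProduct continuous_id).tendsto _).comp
    (hasDerivAt_iff_tendsto_slope.1 hderiv) |>.congr fun ε => ?_
  simp [slope_def_module, dotProduct_smul, div_eq_inv_mul]

theorem tendsto_integral_dotProduct_sub_div {μ : Measure (ι → ℝ)} (hμ : MemLp id 2 μ)
    {h : (ι → ℝ) → ι → ℝ} {K : ℝ≥0} (hK : LipschitzWith K h) {y : ι → ℝ}
    (hy : DifferentiableAt ℝ h y) :
    Tendsto (fun ε : ℝ => ∫ x, x ⬝ᵥ (h (y + ε • x) - h y) / ε ∂μ) (𝓝[≠] 0)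
      (𝓝 (∫ x, x ⬝ᵥ fderiv ℝ h y x ∂μ)) := by
  refine tendsto_integral_filter_of_dominated_convergence
    (fun x => Fintype.card ι * K * ‖x‖ ^ 2) ?_ ?_ ?_ ?_
  · have hcont := hK.continuous
    exact Eventually.of_forall fun ε => Continuous.aestronglyMeasurable (by fun_prop)
  · filter_upwards [self_mem_nhdsWithin] with ε hε
    exact ae_of_all _ fun x => abs_dotProduct_sub_div_le hK y x hε
  · exact (hμ.integrable_norm_pow two_ne_zero).const_mul _
  · exact ae_of_all _ (tendsto_dotProduct_sub_div hy)

end DirectionalDifference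

section Isotropic

variable {ι : Type*} [Fintype ι] [DecidableEq ι]

theorem integral_dotProduct_mulVec_eq_trace {μ : Measure (ι → ℝ)} (hμ : MemLp id 2 μ)
    (hcov : ∀ i j, ∫ x, x i * x j ∂μ = if i = j then 1 else 0) (M : Matrix ι ι ℝ) :
    ∫ x, x ⬝ᵥ M *ᵥ x ∂μ = M.trace := by
  have hint (i j : ι) : Integrable (fun x => M i j * (x i * x j)) μ :=
    ((hμ.eval i).integrable_mul (hμ.eval j)).const_mul _
  have hexpand (x : ι → ℝ) : x ⬝ᵥ M *ᵥ x = ∑ i, ∑ j, M i j * (x i * x j) := by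
    simp only [dotProduct, mulVec, Finset.mul_sum]
    exact Finset.sum_congr rfl fun i _ => Finset.sum_congr rfl fun j _ => by ring
  simp_rw [hexpand]
  rw [integral_finsetSum _ fun i _ => integrable_finsetSum _ fun j _ => hint i j]
  simp_rw [integral_finsetSum _ fun j _ => hint _ j, integral_const_mul, hcov]
  simp [Matrix.trace]

end Isotropic

section StandardGaussian

variable {ι : Type*} [Fintype ι]

lemma integral_eval_mul_eval_pi_of_ne {μ : ι → Measure ℝ} [∀ i, IsProbabilityMeasure (μ i)]
    {i j : ι} (hij : i ≠ j) :
    ∫ x, x i * x j ∂Measure.pi μ = (∫ t, t ∂μ i) * ∫ t, t ∂μ j := by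
  rw [((iIndepFun_pi (X := fun _ => id) fun _ => aemeasurable_id).indepFun hij)
    |>.integral_fun_mul_eq_mul_integral (measurable_pi_apply i).aestronglyMeasurable
      (measurable_pi_apply j).aestronglyMeasurable, integral_eval, integral_eval]

lemma memLp_id_pi_gaussianReal : MemLp id 2 (Measure.pi fun _ : ι => gaussianReal 0 1) :=
  memLp_pi_iff.2 fun i =>
    (memLp_id_gaussianReal 2).comp_measurePreserving (measurePreserving_eval _ i)

lemma integral_eval_mul_eval_pi_gaussianReal [DecidableEq ι] (i j : ι) :
    ∫ x, x i * x j ∂(Measure.pi fun _ : ι => gaussianReal 0 1) = if i = j then 1 else 0 := by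
  split_ifs with hij
  · subst hij
    rw [integral_comp_eval (μ := fun _ : ι => gaussianReal 0 1) (f := fun t : ℝ => t * t)
      (by fun_prop)]
    simpa [sq, integral_id_gaussianReal] using
      (variance_eq_integral (X := id) (μ := gaussianReal 0 1) aemeasurable_id).symm.trans
        variance_id_gaussianReal
  · simp [integral_eval_mul_eval_pi_of_ne hij, integral_id_gaussianReal]

end StandardGaussian

theorem mc_divergence_limit_general (N : ℕ) (y : Fin N → ℝ)
    (h : (Fin N → ℝ) → (Fin N → ℝ)) (hdiff : ContDiff ℝ 1 h)
    (C : ℝ) (hC : ∀ v : Fin N → ℝ, ‖fderiv ℝ h v‖ ≤ C) :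
    Tendsto
      (fun ε : ℝ =>
        ∫ nt, (∑ i, nt i * (h (y + ε • nt) i - h y i)) / ε
          ∂(Measure.pi fun _ : Fin N => gaussianReal 0 1))
      (𝓝[>] 0)
      (𝓝 (∑ i, fderiv ℝ h y (Pi.single i 1) i)) := by
  have hdiffble : Differentiable ℝ h := hdiff.differentiable one_ne_zero
  have hlip : LipschitzWith C.toNNReal h :=
    lipschitzWith_of_nnnorm_fderiv_le hdiffble fun v => by
      rw [← NNReal.coe_le_coe, coe_nnnorm]; exact (hC v).trans (Real.le_coe_toNNReal C)
  have hlim := (tendsto_integral_dotProduct_sub_div memLp_id_pi_gaussianReal hlip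
    (hdiffble y)).mono_left (nhdsWithin_mono 0 fun _ => ne_of_gt)
  have hmatrix (x : Fin N → ℝ) :
      fderiv ℝ h y x = LinearMap.toMatrix' (fderiv ℝ h y : (Fin N → ℝ) →ₗ[ℝ] Fin N → ℝ) *ᵥ x := by
    simp
  simp_rw [hmatrix] at hlim
  -- `⬝ᵥ` and `Matrix.trace ∘ LinearMap.toMatrix'` unfold to the sums of the statement
  rwa [integral_dotProduct_mulVec_eq_trace memLp_id_pi_gaussianReal
    integral_eval_mul_eval_pi_gaussianReal] at hlim

/-- Monte-Carlo divergence approximation: for `h : ℝ^N → ℝ^N` C¹ with bounded derivative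
and `nt ~ N(0, I)`, `lim_{ε→0⁺} E_nt[ntᵀ(h(y + ε·nt) - h(y))/ε] = ∑ᵢ ∂hᵢ(y)/∂yᵢ`. -/
theorem mc_divergence_limit (N : ℕ) (hN : 0 < N) (y : Fin N → ℝ)
    (h : (Fin N → ℝ) → (Fin N → ℝ)) (hdiff : ContDiff ℝ 1 h)
    (C : ℝ) (hC : ∀ v : Fin N → ℝ, ‖fderiv ℝ h v‖ ≤ C) :
    Tendsto
      (fun ε : ℝ =>
        ∫ nt, (∑ i, nt i * (h (y + ε • nt) i - h y i)) / ε
          ∂(Measure.pi fun _ : Fin N => gaussianReal 0 1))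
      (𝓝[>] 0)
      (𝓝 (∑ i, fderiv ℝ h y (Pi.single i 1) i)) :=
  mc_divergence_limit_general N y h hdiff C hC
end

section
/- Noise2Noise correctness: if x, y, z are jointly distributed random vectors in ℝ^N such that conditionally on x, the vector z - x has mean zero and is uncorrelated with (independent of) y, then E[‖x - h(y)‖²] = E[‖z - h(y)‖²] - E[‖z - x‖²] for any measurable h with h(y) square-integrable. In particular the Noise2Noise loss E[‖z - h(y)‖²] differs from the true MSE E[‖x - h(y)‖²] by a constant independent of h. -/
/-!
Write `w = z - x` for the noise. Coordinatewise, `z - h(y) = w + (x - h(y))`, so the identity is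
Pythagoras in `L²(μ)` once `w` is orthogonal to `x - h(y)`. Conditioning on `x`: the product
`x * w` has conditional expectation `x * E[w | x] = 0`, and by conditional independence
`E[w * h(y) | x] = E[w | x] * E[h(y) | x] = 0`. The latter is computed fibrewise, since
conditional independence makes `w` and `y` independent under almost every conditional
distribution `condExpKernel μ (σ(x)) ω`.
-/

open MeasureTheory

namespace ProbabilityTheory

section Orthogonality

variable {Ω : Type*} {m mΩ : MeasurableSpace Ω} {μ : Measure Ω}

theorem integral_eq_zero_of_condExp_ae_eq_zero (hm : m ≤ mΩ) [SigmaFinite (μ.trim hm)]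
    {f : Ω → ℝ} (hf : μ[f | m] =ᵐ[μ] 0) : ∫ ω, f ω ∂μ = 0 := by
  rw [← integral_condExp hm, integral_congr_ae hf, Pi.zero_def, integral_zero]

theorem integral_add_sq_of_integral_mul_eq_zero {f g : Ω → ℝ} (hf : MemLp f 2 μ)
    (hg : MemLp g 2 μ) (hfg : ∫ ω, f ω * g ω ∂μ = 0) :
    ∫ ω, (f ω + g ω) ^ 2 ∂μ = ∫ ω, f ω ^ 2 ∂μ + ∫ ω, g ω ^ 2 ∂μ := by
  have hfg_int : Integrable (fun ω => 2 * (f ω * g ω)) μ := (hf.integrable_mul hg).const_mul 2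
  calc ∫ ω, (f ω + g ω) ^ 2 ∂μ = ∫ ω, (f ω ^ 2 + 2 * (f ω * g ω) + g ω ^ 2) ∂μ := by
        congr with ω; ring
    _ = ∫ ω, f ω ^ 2 ∂μ + 2 * ∫ ω, f ω * g ω ∂μ + ∫ ω, g ω ^ 2 ∂μ := by
        rw [integral_add (f := fun ω => f ω ^ 2 + 2 * (f ω * g ω))
            (hf.integrable_sq.add hfg_int) hg.integrable_sq,
          integral_add hf.integrable_sq hfg_int, integral_const_mul]
    _ = ∫ ω, f ω ^ 2 ∂μ + ∫ ω, g ω ^ 2 ∂μ := by rw [hfg, mul_zero, add_zero]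

end Orthogonality

section CondIndep

variable {Ω : Type*} {m mΩ : MeasurableSpace Ω} [StandardBorelSpace Ω] {hm : m ≤ mΩ}
  {μ : Measure Ω} [IsFiniteMeasure μ]

theorem CondIndepFun.ae_indepFun_condExpKernel {β β' : Type*} [MeasurableSpace β]
    [MeasurableSpace β'] [MeasurableSpace.CountableOrCountablyGenerated Ω (β × β')]
    {f : Ω → β} {g : Ω → β'} (hf : Measurable f) (hg : Measurable g)
    (h : CondIndepFun m hm f g μ) :
    ∀ᵐ ω ∂μ, IndepFun f g (condExpKernel μ m ω) := by
  filter_upwards [ae_of_ae_trim hm ((condIndepFun_iff_map_prod_eq_prod_map_map hf hg).1 h)]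
    with ω hω
  rw [indepFun_iff_map_prod_eq_prod_map_map hf.aemeasurable hg.aemeasurable]
  simpa [Kernel.map_apply, Kernel.prod_apply, hf, hg, hf.prodMk hg] using hω

theorem CondIndepFun.condExp_mul_ae_eq_mul_condExp {f g : Ω → ℝ} (hf : Measurable f)
    (hg : Measurable g) (hfi : Integrable f μ) (hgi : Integrable g μ)
    (hfgi : Integrable (f * g) μ) (h : CondIndepFun m hm f g μ) :
    μ[f * g | m] =ᵐ[μ] μ[f | m] * μ[g | m] := by
  filter_upwards [h.ae_indepFun_condExpKernel hf hg, condExp_ae_eq_integral_condExpKernel hm hfgi,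
    condExp_ae_eq_integral_condExpKernel hm hfi, condExp_ae_eq_integral_condExpKernel hm hgi]
    with ω hind hfg_eq hf_eq hg_eq
  rw [Pi.mul_apply, hfg_eq, hf_eq, hg_eq]
  exact hind.integral_mul_eq_mul_integral hf.aestronglyMeasurable hg.aestronglyMeasurable

theorem integral_mul_sub_eq_zero_of_condExp_eq_zero {w a e : Ω → ℝ} (hw : Measurable w)
    (he : Measurable e) (ha : StronglyMeasurable[m] a) (hw2 : MemLp w 2 μ) (ha2 : MemLp a 2 μ)
    (he2 : MemLp e 2 μ) (hw0 : μ[w | m] =ᵐ[μ] 0) (hind : CondIndepFun m hm w e μ) :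
    ∫ ω, w ω * (a ω - e ω) ∂μ = 0 := by
  have hwi : Integrable w μ := hw2.integrable one_le_two
  have haw : μ[a * w | m] =ᵐ[μ] 0 := by
    filter_upwards [condExp_mul_of_stronglyMeasurable_left ha (ha2.integrable_mul hw2) hwi, hw0]
      with ω hω hω0
    simp [hω, hω0]
  have hwe : μ[w * e | m] =ᵐ[μ] 0 := by
    filter_upwards [hind.condExp_mul_ae_eq_mul_condExp hw he hwi (he2.integrable one_le_two)
      (hw2.integrable_mul he2), hw0] with ω hω hω0
    simp [hω, hω0]
  calc ∫ ω, w ω * (a ω - e ω) ∂μ = ∫ ω, ((a * w) ω - (w * e) ω) ∂μ := by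
        congr with ω; simp only [Pi.mul_apply]; ring
    _ = 0 := by
        rw [integral_sub (ha2.integrable_mul hw2) (hw2.integrable_mul he2),
          integral_eq_zero_of_condExp_ae_eq_zero hm haw,
          integral_eq_zero_of_condExp_ae_eq_zero hm hwe, sub_zero]

theorem integral_sq_sub_eq_of_condIndepFun {a c e : Ω → ℝ} (ha : StronglyMeasurable[m] a)
    (hc : Measurable c) (he : Measurable e) (ha2 : MemLp a 2 μ) (hc2 : MemLp c 2 μ)
    (he2 : MemLp e 2 μ) (hmean : μ[fun ω => c ω - a ω | m] =ᵐ[μ] 0)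
    (hind : CondIndepFun m hm (fun ω => c ω - a ω) e μ) :
    ∫ ω, (a ω - e ω) ^ 2 ∂μ = ∫ ω, (c ω - e ω) ^ 2 ∂μ - ∫ ω, (c ω - a ω) ^ 2 ∂μ := by
  have horth := integral_mul_sub_eq_zero_of_condExp_eq_zero (hc.sub (ha.measurable.mono hm le_rfl))
    he ha (hc2.sub ha2) ha2 he2 hmean hind
  have hpyth : ∫ ω, (c ω - e ω) ^ 2 ∂μ
      = ∫ ω, (c ω - a ω) ^ 2 ∂μ + ∫ ω, (a ω - e ω) ^ 2 ∂μ := by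
    simpa only [Pi.sub_apply, sub_add_sub_cancel] using
      integral_add_sq_of_integral_mul_eq_zero (hc2.sub ha2) (ha2.sub he2) horth
  linarith

end CondIndep

end ProbabilityTheory

open ProbabilityTheory

theorem noise2noise_correctness_general {Ω : Type*} [MeasurableSpace Ω] [StandardBorelSpace Ω]
    (μ : Measure Ω) [IsProbabilityMeasure μ] (N : ℕ)
    (x y z : Ω → (Fin N → ℝ))
    (hy : Measurable y) (hz : Measurable z)
    (hx2 : MemLp x 2 μ) (hz2 : MemLp z 2 μ)
    (hm : MeasurableSpace.comap x inferInstance ≤ ‹MeasurableSpace Ω›)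
    -- conditionally on x, z - x has mean zero:
    (hmean : ∀ i, μ[fun ω => z ω i - x ω i | MeasurableSpace.comap x inferInstance]
      =ᵐ[μ] 0)
    -- conditionally on x, z - x is independent of y:
    (hindep : CondIndepFun (MeasurableSpace.comap x inferInstance) hm
      (fun ω => z ω - x ω) y μ)
    (h : (Fin N → ℝ) → (Fin N → ℝ)) (hmeas : Measurable h)
    (hh2 : MemLp (fun ω => h (y ω)) 2 μ) :
    ∫ ω, ∑ i, (x ω i - h (y ω) i) ^ 2 ∂μ
      = ∫ ω, ∑ i, (z ω i - h (y ω) i) ^ 2 ∂μ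
        - ∫ ω, ∑ i, (z ω i - x ω i) ^ 2 ∂μ := by
  have hcoord (i : Fin N) := integral_sq_sub_eq_of_condIndepFun
    ((measurable_pi_apply i).comp (comap_measurable x)).stronglyMeasurable
    ((measurable_pi_apply i).comp hz) ((measurable_pi_apply i).comp (hmeas.comp hy))
    (hx2.eval i) (hz2.eval i) (hh2.eval i) (hmean i)
    (hindep.comp (measurable_pi_apply i) ((measurable_pi_apply i).comp hmeas))
  have hsq (f g : Ω → Fin N → ℝ) (hf : MemLp f 2 μ) (hg : MemLp g 2 μ) (i : Fin N) :
      Integrable (fun ω => (f ω i - g ω i) ^ 2) μ :=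
    ((hf.eval i).sub (hg.eval i)).integrable_sq
  rw [integral_finsetSum _ fun i _ => hsq _ _ hx2 hh2 i,
    integral_finsetSum _ fun i _ => hsq _ _ hz2 hh2 i,
    integral_finsetSum _ fun i _ => hsq _ _ hz2 hx2 i, ← Finset.sum_sub_distrib]
  exact Finset.sum_congr rfl fun i _ => hcoord i

/-- Noise2Noise correctness: if, conditionally on `x`, the vector `z - x` has mean zero
and is independent of `y`, then `E[‖x - h(y)‖²] = E[‖z - h(y)‖²] - E[‖z - x‖²]` for any
measurable `h` with `h(y)` square-integrable; i.e. the Noise2Noise loss differs from the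
true MSE by a constant independent of `h`. -/
theorem noise2noise_correctness {Ω : Type*} [MeasurableSpace Ω] [StandardBorelSpace Ω]
    (μ : Measure Ω) [IsProbabilityMeasure μ] (N : ℕ)
    (x y z : Ω → (Fin N → ℝ))
    (hx : Measurable x) (hy : Measurable y) (hz : Measurable z)
    (hx2 : MemLp x 2 μ) (hy2 : MemLp y 2 μ) (hz2 : MemLp z 2 μ)
    (hm : MeasurableSpace.comap x inferInstance ≤ ‹MeasurableSpace Ω›)
    -- conditionally on x, z - x has mean zero:
    (hmean : ∀ i, μ[fun ω => z ω i - x ω i | MeasurableSpace.comap x inferInstance]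
      =ᵐ[μ] 0)
    -- conditionally on x, z - x is independent of y:
    (hindep : CondIndepFun (MeasurableSpace.comap x inferInstance) hm
      (fun ω => z ω - x ω) y μ)
    (h : (Fin N → ℝ) → (Fin N → ℝ)) (hmeas : Measurable h)
    (hh2 : MemLp (fun ω => h (y ω)) 2 μ) :
    ∫ ω, ∑ i, (x ω i - h (y ω) i) ^ 2 ∂μ
      = ∫ ω, ∑ i, (z ω i - h (y ω) i) ^ 2 ∂μ
        - ∫ ω, ∑ i, (z ω i - x ω i) ^ 2 ∂μ :=
  noise2noise_correctness_general μ N x y z hy hz hx2 hz2 hm hmean hindep h hmeas hh2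
end

section
/- If y and z are conditionally independent given x, z has conditional mean x given x, and h(y) is square-integrable, then E[(z - x)ᵀ h(y)] = 0. -/
/-!
By conditional independence, `E[zᵢ hᵢ(y) | x] = E[zᵢ | x] E[hᵢ(y) | x] = xᵢ E[hᵢ(y) | x]
= E[xᵢ hᵢ(y) | x]`, so every coordinate of the cross term has zero expectation.
The factorisation is computed with the regular conditional distribution `condExpKernel`:
conditional independence only gives one null set per pair of measurable sets, but a countable
generating π-system on each codomain makes `y` and `z` independent under the kernel for
almost every `ω`, and there the product of the integrals factors.
-/

open MeasureTheory ProbabilityTheory MeasurableSpace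

lemma Set.Countable.generatePiSystem {β : Type*} {S : Set (Set β)} (hS : S.Countable) :
    (generatePiSystem S).Countable := by
  refine ((countable_ofPred_finite_subset hS).image sInter).mono fun t ht ↦ ?_
  induction ht with
  | base hs => exact ⟨{_}, ⟨finite_singleton _, singleton_subset_iff.2 hs⟩, sInter_singleton _⟩
  | inter _ _ _ ihs iht =>
    obtain ⟨T₁, ⟨hT₁, hT₁S⟩, rfl⟩ := ihs
    obtain ⟨T₂, ⟨hT₂, hT₂S⟩, rfl⟩ := iht
    exact ⟨T₁ ∪ T₂, ⟨hT₁.union hT₂, union_subset hT₁S hT₂S⟩, sInter_union T₁ T₂⟩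

lemma MeasurableSpace.exists_countable_isPiSystem_generateFrom_eq (β : Type*)
    [mβ : MeasurableSpace β] [CountablyGenerated β] :
    ∃ S : Set (Set β), S.Countable ∧ IsPiSystem S ∧ generateFrom S = mβ :=
  ⟨generatePiSystem (countableGeneratingSet β), countable_countableGeneratingSet.generatePiSystem,
    isPiSystem_generatePiSystem _,
    by rw [generateFrom_generatePiSystem_eq, generateFrom_countableGeneratingSet]⟩

lemma ProbabilityTheory.Kernel.IndepFun.ae_indepFun {α Ω β γ : Type*} {mα : MeasurableSpace α}
    {mΩ : MeasurableSpace Ω} {κ : Kernel α Ω} [IsZeroOrMarkovKernel κ] {ν : Measure α}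
    [mβ : MeasurableSpace β] [CountablyGenerated β] [mγ : MeasurableSpace γ]
    [CountablyGenerated γ] {y : Ω → β} {z : Ω → γ} (hy : Measurable y) (hz : Measurable z)
    (hindep : Kernel.IndepFun y z κ ν) :
    ∀ᵐ a ∂ν, y ⟂ᵢ[κ a] z := by
  obtain ⟨S, hSc, hSpi, hSgen⟩ := exists_countable_isPiSystem_generateFrom_eq β
  obtain ⟨T, hTc, hTpi, hTgen⟩ := exists_countable_isPiSystem_generateFrom_eq γ
  have hmul : ∀ᵐ a ∂ν, ∀ s ∈ S, ∀ t ∈ T,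
      κ a (y ⁻¹' s ∩ z ⁻¹' t) = κ a (y ⁻¹' s) * κ a (z ⁻¹' t) := by
    refine (ae_ball_iff hSc).2 fun s hs ↦ (ae_ball_iff hTc).2 fun t ht ↦ ?_
    refine indepFun_iff_measure_inter_preimage_eq_mul.1 hindep s t ?_ ?_
    · exact hSgen ▸ measurableSet_generateFrom hs
    · exact hTgen ▸ measurableSet_generateFrom ht
  filter_upwards [hmul] with a ha
  refine ProbabilityTheory.IndepSets.indep hy.comap_le hz.comap_le (hSpi.comap y) (hTpi.comap z)
    (by rw [← hSgen, comap_generateFrom]; rfl) (by rw [← hTgen, comap_generateFrom]; rfl) ?_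
  rw [ProbabilityTheory.IndepSets_iff]
  rintro _ _ ⟨s, hs, rfl⟩ ⟨t, ht, rfl⟩
  exact ha s hs t ht

section CondIndep

variable {Ω β γ : Type*} {m' mΩ : MeasurableSpace Ω} [StandardBorelSpace Ω] {μ : Measure Ω}
  [IsFiniteMeasure μ] {hm : m' ≤ mΩ} [MeasurableSpace β] [CountablyGenerated β]
  [MeasurableSpace γ] [CountablyGenerated γ] {y : Ω → β} {z : Ω → γ}

lemma ProbabilityTheory.CondIndepFun.ae_indepFun_condExpKernel_s17 (hindep : CondIndepFun m' hm y z μ)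
    (hy : Measurable y) (hz : Measurable z) :
    ∀ᵐ ω ∂μ, y ⟂ᵢ[condExpKernel μ m' ω] z :=
  ae_of_ae_trim hm (Kernel.IndepFun.ae_indepFun hy hz hindep)

variable {f : β → ℝ} {g : γ → ℝ}

theorem ProbabilityTheory.CondIndepFun.condExp_comp_mul_comp (hindep : CondIndepFun m' hm y z μ)
    (hy : Measurable y) (hz : Measurable z) (hf : Measurable f) (hg : Measurable g)
    (hfy : Integrable (fun ω ↦ f (y ω)) μ) (hgz : Integrable (fun ω ↦ g (z ω)) μ)
    (hfgyz : Integrable (fun ω ↦ f (y ω) * g (z ω)) μ) :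
    μ[fun ω ↦ f (y ω) * g (z ω) | m']
      =ᵐ[μ] fun ω ↦ μ[fun ω ↦ f (y ω) | m'] ω * μ[fun ω ↦ g (z ω) | m'] ω := by
  filter_upwards [condExp_ae_eq_integral_condExpKernel hm hfgyz,
    condExp_ae_eq_integral_condExpKernel hm hfy, condExp_ae_eq_integral_condExpKernel hm hgz,
    hindep.ae_indepFun_condExpKernel_s17 hy hz] with ω hfgω hfω hgω hindepω
  rw [hfgω, hfω, hgω]
  exact hindepω.integral_fun_comp_mul_comp hy.aemeasurable hz.aemeasurable
    hf.aestronglyMeasurable hg.aestronglyMeasurable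

theorem ProbabilityTheory.CondIndepFun.integral_comp_sub_mul_comp_eq_zero
    (hindep : CondIndepFun m' hm y z μ) (hy : Measurable y) (hz : Measurable z)
    (hf : Measurable f) (hg : Measurable g) {X : Ω → ℝ} (hX : StronglyMeasurable[m'] X)
    (hmean : μ[fun ω ↦ g (z ω) | m'] =ᵐ[μ] X)
    (hgz : MemLp (fun ω ↦ g (z ω)) 2 μ) (hfy : MemLp (fun ω ↦ f (y ω)) 2 μ) :
    ∫ ω, (g (z ω) - X ω) * f (y ω) ∂μ = 0 := by
  have hX2 : MemLp X 2 μ := (hgz.condExp one_le_two).ae_eq hmean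
  have hgfzy : Integrable (fun ω ↦ g (z ω) * f (y ω)) μ := hgz.integrable_mul hfy
  have hXfy : Integrable (fun ω ↦ X ω * f (y ω)) μ := hX2.integrable_mul hfy
  have hfy1 : Integrable (fun ω ↦ f (y ω)) μ := hfy.integrable one_le_two
  have hcross : ∫ ω, g (z ω) * f (y ω) ∂μ = ∫ ω, X ω * f (y ω) ∂μ :=
    calc ∫ ω, g (z ω) * f (y ω) ∂μ
        = ∫ ω, μ[fun ω ↦ g (z ω) * f (y ω) | m'] ω ∂μ := (integral_condExp hm).symm
      _ = ∫ ω, X ω * μ[fun ω ↦ f (y ω) | m'] ω ∂μ := by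
        refine integral_congr_ae ?_
        filter_upwards [hindep.symm.condExp_comp_mul_comp hz hy hg hf
          (hgz.integrable one_le_two) hfy1 hgfzy, hmean] with ω hω hmeanω
        rw [hω, hmeanω]
      _ = ∫ ω, μ[fun ω ↦ X ω * f (y ω) | m'] ω ∂μ :=
        integral_congr_ae (condExp_mul_of_stronglyMeasurable_left hX hXfy hfy1).symm
      _ = ∫ ω, X ω * f (y ω) ∂μ := integral_condExp hm
  simp only [sub_mul]
  rw [integral_sub hgfzy hXfy, hcross, sub_self]

end CondIndep

theorem noise2noise_cross_term_zero_general {Ω : Type*} [MeasurableSpace Ω]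
    [StandardBorelSpace Ω] (μ : Measure Ω) [IsProbabilityMeasure μ] (N : ℕ)
    (x y z : Ω → (Fin N → ℝ))
    (hy : Measurable y) (hz : Measurable z)
    (hz2 : MemLp z 2 μ)
    (hm : MeasurableSpace.comap x inferInstance ≤ ‹MeasurableSpace Ω›)
    -- conditionally on x, z has mean x:
    (hmean : ∀ i, (μ[(fun ω => z ω i) | MeasurableSpace.comap x inferInstance])
      =ᵐ[μ] fun ω => x ω i)
    -- y and z are conditionally independent given x:
    (hindep : CondIndepFun (MeasurableSpace.comap x inferInstance) hm y z μ)
    (h : (Fin N → ℝ) → (Fin N → ℝ)) (hmeas : Measurable h)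
    (hh2 : MemLp (fun ω => h (y ω)) 2 μ) :
    ∫ ω, ∑ i, (z ω i - x ω i) * h (y ω) i ∂μ = 0 := by
  have hterm_integrable (i : Fin N) :
      Integrable (fun ω ↦ (z ω i - x ω i) * h (y ω) i) μ :=
    ((hz2.eval i).sub (((hz2.eval i).condExp one_le_two).ae_eq (hmean i))).integrable_mul
      (hh2.eval i)
  have hterm_zero (i : Fin N) : ∫ ω, (z ω i - x ω i) * h (y ω) i ∂μ = 0 :=
    hindep.integral_comp_sub_mul_comp_eq_zero hy hz ((measurable_pi_apply i).comp hmeas)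
      (measurable_pi_apply i)
      ((measurable_pi_apply i).comp (comap_measurable x)).stronglyMeasurable
      (hmean i) (hz2.eval i) (hh2.eval i)
  rw [integral_finsetSum _ fun i _ ↦ hterm_integrable i]
  exact Finset.sum_eq_zero fun i _ ↦ hterm_zero i

/-- Cross-term vanishing lemma justifying Noise2Noise: if `y` and `z` are conditionally
independent given `x`, `z` has conditional mean `x` given `x`, and `h(y)` is
square-integrable, then `E[(z - x)ᵀ h(y)] = 0`. -/
theorem noise2noise_cross_term_zero {Ω : Type*} [MeasurableSpace Ω]
    [StandardBorelSpace Ω] (μ : Measure Ω) [IsProbabilityMeasure μ] (N : ℕ)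
    (x y z : Ω → (Fin N → ℝ))
    (hx : Measurable x) (hy : Measurable y) (hz : Measurable z)
    (hz2 : MemLp z 2 μ)
    (hm : MeasurableSpace.comap x inferInstance ≤ ‹MeasurableSpace Ω›)
    -- conditionally on x, z has mean x:
    (hmean : ∀ i, (μ[(fun ω => z ω i) | MeasurableSpace.comap x inferInstance])
      =ᵐ[μ] fun ω => x ω i)
    -- y and z are conditionally independent given x:
    (hindep : CondIndepFun (MeasurableSpace.comap x inferInstance) hm y z μ)
    (h : (Fin N → ℝ) → (Fin N → ℝ)) (hmeas : Measurable h)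
    (hh2 : MemLp (fun ω => h (y ω)) 2 μ) :
    ∫ ω, ∑ i, (z ω i - x ω i) * h (y ω) i ∂μ = 0 :=
  noise2noise_cross_term_zero_general μ N x y z hy hz hz2 hm hmean hindep h hmeas hh2
end
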